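/- Let n ∈ ℕ and let a, b ∈ V_{n+1} be elements of the (n+1)-st level of the cumulative hierarchy. If a ≠ b, then the pointed frames (M_a, a) and (M_b, b) are not n-bisimilar. -/
import Mathlib


universe u v

/-- A Kripke model for a set `Φ` of proposition symbols: a set of worlds `W`,
an accessibility relation `R` and a valuation `V`. -/
structure KripkeModel (Φ : Type) : Type (u + 1) where
  W : Type u
  R : W → W → Prop
  V : Φ → W → Prop

/-- A pointed Kripke model: a Kripke model together with a distinguished world. -/
structure PointedModel (Φ : Type) : Type (u + 1) where
  M : KripkeModel.{u} Φ
  w : M.W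

/-- `n`-bisimilarity of pointed models: there are relations `Zₙ ⊆ … ⊆ Z₀` such that the
distinguished pair is in `Zₙ`, `Z₀` relates only propositionally equivalent points, and the
back-and-forth conditions hold for each `0 ≤ i ≤ n-1`. -/
def NBisim {Φ : Type} (n : ℕ) (M : KripkeModel.{u} Φ) (w : M.W)
    (N : KripkeModel.{v} Φ) (x : N.W) : Prop :=
  ∃ Z : ℕ → M.W → N.W → Prop,
    (∀ i, i < n → ∀ a b, Z (i + 1) a b → Z i a b) ∧
    Z n w x ∧
    (∀ a b, Z 0 a b → ∀ p, M.V p a ↔ N.V p b) ∧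
    (∀ i, i < n → ∀ a b, Z (i + 1) a b → ∀ c, M.R a c → ∃ d, N.R b d ∧ Z i c d) ∧
    (∀ i, i < n → ∀ a b, Z (i + 1) a b → ∀ d, N.R b d → ∃ c, M.R a c ∧ Z i c d)

/-- The finite levels of the cumulative hierarchy: `V₀ = ∅`, `V_{k+1} = 𝒫(V_k)`. -/
def Vlev : ℕ → ZFSet
  | 0 => ∅
  | n + 1 => ZFSet.powerset (Vlev n)

/-- The converse-membership accessibility relation on sets: `a R b` iff `b ∈ a`. -/
def zmem (a b : ZFSet) : Prop := b ∈ a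

/-- `M_a`: the subframe of the frame `(V, ∋)` generated by the point `a`; its domain
consists of all points reachable from `a` by iterated membership. -/
def Ma (a : ZFSet) : KripkeModel.{1} Empty where
  W := {x : ZFSet // Relation.ReflTransGen zmem a x}
  R := fun x y => zmem x.1 y.1
  V := fun p _ => p.elim

/-- The pointed frame `(M_a, a)`. -/
def Mpt (a : ZFSet) : PointedModel.{1} Empty :=
  ⟨Ma a, ⟨a, Relation.ReflTransGen.refl⟩⟩

/-- **Lemma 13 (Hella–Vilander).**  Distinct sets `a, b ∈ V_{n+1}` yield pointed frames
`(M_a, a)` and `(M_b, b)` that are not `n`-bisimilar. -/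
theorem not_nbisim_of_ne (n : ℕ) (a b : ZFSet)
    (ha : a ∈ Vlev (n + 1)) (hb : b ∈ Vlev (n + 1)) (hne : a ≠ b) :
    ¬ NBisim n (Ma a) (Mpt a).w (Ma b) (Mpt b).w := by
  rintro ⟨Z, hmono, hZn, hV, hforth, hback⟩
  suffices H : ∀ k, k ≤ n → ∀ (x : (Ma a).W) (y : (Ma b).W),
      x.1 ∈ Vlev (k + 1) → y.1 ∈ Vlev (k + 1) → x.1 ≠ y.1 → ¬ Z k x y by
    exact H n le_rfl _ _ ha hb hne hZn
  intro k
  induction k with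
  | zero =>
    intro _ x y hx hy hxy _
    rw [show Vlev 1 = ZFSet.powerset (Vlev 0) from rfl, ZFSet.mem_powerset] at hx hy
    apply hxy
    have hx' : x.1 = ∅ := by
      apply ZFSet.ext; intro z
      exact iff_of_false (fun hz => ZFSet.notMem_empty z (hx hz))
        (ZFSet.notMem_empty z)
    have hy' : y.1 = ∅ := by
      apply ZFSet.ext; intro z
      exact iff_of_false (fun hz => ZFSet.notMem_empty z (hy hz))
        (ZFSet.notMem_empty z)
    rw [hx', hy']
  | succ k ih =>
    intro hk x y hx hy hxy hZ
    have hk' : k < n := hk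
    rw [show Vlev (k + 2) = ZFSet.powerset (Vlev (k + 1)) from rfl,
      ZFSet.mem_powerset] at hx hy
    have hwit : ∃ c, (c ∈ x.1 ∧ c ∉ y.1) ∨ (c ∈ y.1 ∧ c ∉ x.1) := by
      by_contra h
      apply hxy
      apply ZFSet.ext; intro z
      constructor <;> intro hz <;> by_contra hz'
      · exact h ⟨z, Or.inl ⟨hz, hz'⟩⟩
      · exact h ⟨z, Or.inr ⟨hz, hz'⟩⟩
    obtain ⟨c, hc | hc⟩ := hwit
    · obtain ⟨hcx, hcy⟩ := hc
      have cw : Relation.ReflTransGen zmem a c := x.2.tail hcx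
      obtain ⟨d, hd, hZd⟩ := hforth k hk' x y hZ ⟨c, cw⟩ hcx
      exact ih (le_of_lt hk') ⟨c, cw⟩ d (hx hcx) (hy hd)
        (fun h => hcy (by have h' : c = d.1 := h; rw [h']; exact hd)) hZd
    · obtain ⟨hcy, hcx⟩ := hc
      have cw : Relation.ReflTransGen zmem b c := y.2.tail hcy
      obtain ⟨d, hd, hZd⟩ := hback k hk' x y hZ ⟨c, cw⟩ hcy
      exact ih (le_of_lt hk') d ⟨c, cw⟩ (hx hd) (hy hcy)
        (fun h => hcx (by have h' : c = d.1 := h.symm; rw [h']; exact hd)) hZd
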